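/- arXiv:math/0407456 — 2 statements merged into one kernel-verified Lean document; each statement's English description precedes it below -/
import Mathlib

section
/- In a finite tree with b-coloring (B, R, G), the set of vertices left unmatched by some maximum matching is exactly G, and the set of vertices matched by every maximum matching but with no fixed incident matched edge is exactly B; the edges belonging to every maximum matching are exactly those of R. -/
variable {V : Type*} [Fintype V] [DecidableEq V]

/-- `C` is a vertex cover of `A`. -/
def IsVC (A : SimpleGraph V) (C : Set V) : Prop :=
  ∀ e ∈ A.edgeSet, ∃ v ∈ C, v ∈ e

/-- `C` is a minimum vertex cover of `A`. -/
def IsMinVC (A : SimpleGraph V) (C : Set V) : Prop :=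
  IsVC A C ∧ ∀ D : Set V, IsVC A D → C.ncard ≤ D.ncard

/-- `M` is a matching of `A`: a set of edges, pairwise non-adjacent. -/
def IsMatch (A : SimpleGraph V) (M : Set (Sym2 V)) : Prop :=
  M ⊆ A.edgeSet ∧ ∀ e ∈ M, ∀ f ∈ M, e ≠ f → ∀ v : V, ¬(v ∈ e ∧ v ∈ f)

/-- `M` is a maximum matching of `A`. -/
def IsMaxMatch (A : SimpleGraph V) (M : Set (Sym2 V)) : Prop :=
  IsMatch A M ∧ ∀ N : Set (Sym2 V), IsMatch A N → N.ncard ≤ M.ncard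

/-- endpoints of a set of edges -/
def Rsupp (R : Set (Sym2 V)) : Set V := {v | ∃ e ∈ R, v ∈ e}

/-- the tricoloring conditions (iii) of the paper -/
def IsBColoring (A : SimpleGraph V) (B : Set V) (R : Set (Sym2 V)) (G : Set V) : Prop :=
  R ⊆ A.edgeSet ∧
  B ∪ G ∪ Rsupp R = Set.univ ∧
  Disjoint B G ∧ Disjoint B (Rsupp R) ∧ Disjoint G (Rsupp R) ∧
  (∀ e ∈ R, ∀ f ∈ R, e ≠ f → ∀ v : V, ¬(v ∈ e ∧ v ∈ f)) ∧
  (∀ v w : V, A.Adj v w → v ∈ G → w ∈ B) ∧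
  (∀ b ∈ B, 2 ≤ (A.neighborSet b ∩ G).ncard)

/-- positive vertex-cover backbone -/
def PosBB (A : SimpleGraph V) : Set V := {v | ∀ C : Set V, IsMinVC A C → v ∈ C}

/-- negative vertex-cover backbone -/
def NegBB (A : SimpleGraph V) : Set V := {v | ∀ C : Set V, IsMinVC A C → v ∉ C}

/-- degenerate vertex -/
def Degen (A : SimpleGraph V) (v : V) : Prop :=
  (∃ C : Set V, IsMinVC A C ∧ v ∈ C) ∧ (∃ C : Set V, IsMinVC A C ∧ v ∉ C)

/-- exclusive edge -/
def Exclusive (A : SimpleGraph V) (e : Sym2 V) : Prop :=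
  e ∈ A.edgeSet ∧ (∀ v ∈ e, Degen A v) ∧
  ∀ C : Set V, IsMinVC A C → ∃ v ∈ e, v ∉ C

/-!
In a forest every nonempty vertex set `W` spans fewer than `|W|` edges. Applied to a set `t ⊆ B`
together with its neighbours in `G`, this gives Hall's condition for matching `B` into `G` even
after one vertex `g` is removed; with `R` added this is a matching of size `|R| + |B|` that avoids
`g` when `g ∈ G` and contains no edge `s(b, g)` with `b ∈ B`. Dually, `B` together with one colour
class of the vertices of `R` (in a proper 2-colouring of the tree) is a vertex cover of size
`|R| + |B|`. So all these matchings are maximum, and every maximum matching meets each of the two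
covers exactly once per edge: it covers `B` and the vertices of `R`, and matches the vertices of
`R` among themselves. Two matchings of a forest with the same vertex set coincide, since their
symmetric difference would span at least as many edges as vertices; hence every maximum matching
contains `R`.
-/

namespace SimpleGraph

variable {V : Type*} {A : SimpleGraph V}

lemma IsAcyclic.ncard_edgeSet_lt [Finite V] [Nonempty V] (hA : A.IsAcyclic) :
    A.edgeSet.ncard < Nat.card V := by
  obtain ⟨T, hAT, -, hT⟩ := connected_top.exists_isTree_le_of_le_of_isAcyclic le_top hA
  have := Fintype.ofFinite V
  classical
  calc A.edgeSet.ncard ≤ T.edgeSet.ncard := Set.ncard_le_ncard (edgeSet_mono hAT)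
    _ < Nat.card V := by
      rw [← coe_edgeFinset, Set.ncard_coe_finset, Nat.card_eq_fintype_card, ← hT.card_edgeFinset]
      exact Nat.lt_succ_self _

lemma IsAcyclic.ncard_lt_of_forall_mem (hA : A.IsAcyclic) {W : Set V} (hW : W.Finite)
    (hne : W.Nonempty) {E : Set (Sym2 V)} (hE : E ⊆ A.edgeSet) (hEW : ∀ e ∈ E, ∀ v ∈ e, v ∈ W) :
    E.ncard < W.ncard := by
  have : Finite W := hW
  have : Nonempty W := hne.to_subtype
  have hsub : E ⊆ Sym2.map Subtype.val '' (A.induce W).edgeSet := by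
    intro e he
    induction e with
    | _ a b =>
      exact ⟨s(⟨a, hEW _ he a (Sym2.mem_mk_left a b)⟩, ⟨b, hEW _ he b (Sym2.mem_mk_right a b)⟩),
        hE he, rfl⟩
  calc E.ncard ≤ (Sym2.map Subtype.val '' (A.induce W).edgeSet).ncard :=
        Set.ncard_le_ncard hsub (Set.toFinite _)
    _ ≤ (A.induce W).edgeSet.ncard := Set.ncard_image_le (Set.toFinite _)
    _ < W.ncard := by
      rw [← Nat.card_coe_set_eq]
      exact (hA.induce W).ncard_edgeSet_lt

end SimpleGraph

section Matching

variable {V : Type*} {A : SimpleGraph V}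

lemma ncard_rsupp_le [Finite V] (D : Set (Sym2 V)) : (Rsupp D).ncard ≤ 2 * D.ncard := by
  have hsub : Rsupp D ⊆ (fun e => e.out.1) '' D ∪ (fun e => e.out.2) '' D := by
    rintro v ⟨e, he, hve⟩
    rw [← e.out_eq] at hve
    rcases Sym2.mem_iff.mp hve with rfl | rfl
    · exact Or.inl ⟨e, he, rfl⟩
    · exact Or.inr ⟨e, he, rfl⟩
  calc (Rsupp D).ncard ≤ ((fun e => e.out.1) '' D ∪ (fun e => e.out.2) '' D).ncard :=
        Set.ncard_le_ncard hsub
    _ ≤ ((fun e => e.out.1) '' D).ncard + ((fun e => e.out.2) '' D).ncard := Set.ncard_union_le _ _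
    _ ≤ 2 * D.ncard := by
      have h1 := Set.ncard_image_le (f := fun e : Sym2 V => e.out.1) (Set.toFinite D)
      have h2 := Set.ncard_image_le (f := fun e : Sym2 V => e.out.2) (Set.toFinite D)
      omega

lemma rsupp_nonempty {D : Set (Sym2 V)} (hD : D.Nonempty) : (Rsupp D).Nonempty := by
  obtain ⟨e, he⟩ := hD
  exact ⟨e.out.1, e, he, e.out_fst_mem⟩

lemma IsMatch.rsupp_sdiff_subset {M₁ M₂ : Set (Sym2 V)} (hM₂ : IsMatch A M₂)
    (h : Rsupp M₂ ⊆ Rsupp M₁) : Rsupp (M₂ \ M₁) ⊆ Rsupp (M₁ \ M₂) := by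
  rintro v ⟨e₂, ⟨he₂, he₂'⟩, hv₂⟩
  obtain ⟨e₁, he₁, hv₁⟩ := h ⟨e₂, he₂, hv₂⟩
  refine ⟨e₁, ⟨he₁, fun he₁' => ?_⟩, hv₁⟩
  exact hM₂.2 e₁ he₁' e₂ he₂ (by rintro rfl; exact he₂' he₁) v ⟨hv₁, hv₂⟩

lemma SimpleGraph.IsAcyclic.eq_of_isMatch_of_rsupp_eq [Finite V] (hA : A.IsAcyclic)
    {M₁ M₂ : Set (Sym2 V)} (hM₁ : IsMatch A M₁) (hM₂ : IsMatch A M₂) (h : Rsupp M₁ = Rsupp M₂) :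
    M₁ = M₂ := by
  -- `M₁ \ M₂` and `M₂ \ M₁` cover the same vertex set `W` with at least `|W|` edges
  set W := Rsupp (M₁ \ M₂)
  have hW₂ : Rsupp (M₂ \ M₁) = W :=
    (hM₂.rsupp_sdiff_subset h.ge).antisymm (hM₁.rsupp_sdiff_subset h.le)
  suffices hW : W = ∅ by
    have h₁ : M₁ \ M₂ = ∅ :=
      Set.not_nonempty_iff_eq_empty.mp fun hne => (rsupp_nonempty hne).ne_empty hW
    have h₂ : M₂ \ M₁ = ∅ :=
      Set.not_nonempty_iff_eq_empty.mp fun hne => (rsupp_nonempty hne).ne_empty (hW₂.trans hW)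
    exact (Set.sdiff_eq_empty.mp h₁).antisymm (Set.sdiff_eq_empty.mp h₂)
  by_contra hne
  have hlt := hA.ncard_lt_of_forall_mem (Set.toFinite W) (Set.nonempty_iff_ne_empty.mpr hne)
    (E := (M₁ \ M₂) ∪ (M₂ \ M₁))
    (Set.union_subset (Set.sdiff_subset.trans hM₁.1) (Set.sdiff_subset.trans hM₂.1))
    (by
      rintro e (he | he) v hv
      · exact ⟨e, he, hv⟩
      · exact hW₂ ▸ ⟨e, he, hv⟩)
  rw [Set.ncard_union_eq disjoint_sdiff_sdiff] at hlt
  have h₁ : W.ncard ≤ 2 * (M₁ \ M₂).ncard := ncard_rsupp_le _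
  have h₂ : W.ncard ≤ 2 * (M₂ \ M₁).ncard := hW₂ ▸ ncard_rsupp_le _
  omega

lemma IsMatch.exists_injective_of_isVC {M : Set (Sym2 V)} {C : Set V} (hM : IsMatch A M)
    (hC : IsVC A C) : ∃ f : M → C, Function.Injective f ∧ ∀ e : M, (f e : V) ∈ (e : Sym2 V) := by
  choose p hpC hpe using fun e : M => hC e (hM.1 e.2)
  refine ⟨fun e => ⟨p e, hpC e⟩, fun e₁ e₂ heq => ?_, hpe⟩
  by_contra hne
  have hp : p e₁ = p e₂ := congrArg Subtype.val heq
  exact hM.2 e₁ e₁.2 e₂ e₂.2 (Subtype.coe_ne_coe.mpr hne) (p e₁) ⟨hpe e₁, hp ▸ hpe e₂⟩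

lemma IsMatch.ncard_le_of_isVC [Finite V] {M : Set (Sym2 V)} {C : Set V} (hM : IsMatch A M)
    (hC : IsVC A C) : M.ncard ≤ C.ncard := by
  obtain ⟨f, hf, -⟩ := hM.exists_injective_of_isVC hC
  exact Nat.card_le_card_of_injective f hf

lemma IsMatch.exists_mem_of_isVC [Finite V] {M : Set (Sym2 V)} {C : Set V}
    (hM : IsMatch A M) (hC : IsVC A C) (hle : C.ncard ≤ M.ncard) {c : V} (hc : c ∈ C) :
    ∃ e ∈ M, c ∈ e := by
  obtain ⟨f, hf, hfe⟩ := hM.exists_injective_of_isVC hC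
  obtain ⟨e, he⟩ := (hf.bijective_of_nat_card_le hle).2 ⟨c, hc⟩
  have hc : (f e : V) = c := congrArg Subtype.val he
  exact ⟨e, e.2, hc ▸ hfe e⟩

lemma IsMatch.eq_of_isVC [Finite V] {M : Set (Sym2 V)} {C : Set V}
    (hM : IsMatch A M) (hC : IsVC A C) (hle : C.ncard ≤ M.ncard) {e : Sym2 V} (he : e ∈ M)
    {c₁ c₂ : V} (hc₁ : c₁ ∈ C) (hc₂ : c₂ ∈ C) (hce₁ : c₁ ∈ e) (hce₂ : c₂ ∈ e) : c₁ = c₂ := by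
  obtain ⟨f, hf, hfe⟩ := hM.exists_injective_of_isVC hC
  have hf_eq : ∀ c (hc : c ∈ C), c ∈ e → f ⟨e, he⟩ = ⟨c, hc⟩ := by
    intro c hc hce
    obtain ⟨e', he'⟩ := (hf.bijective_of_nat_card_le hle).2 ⟨c, hc⟩
    have hfc : (f e' : V) = c := congrArg Subtype.val he'
    have hce' : c ∈ (e' : Sym2 V) := hfc ▸ hfe e'
    by_cases h : (e' : Sym2 V) = e
    · rw [← he', ← Subtype.coe_eq_of_eq_mk h]
    · exact absurd ⟨hce', hce⟩ (hM.2 e' e'.2 e he h c)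
  exact congrArg Subtype.val ((hf_eq c₁ hc₁ hce₁).symm.trans (hf_eq c₂ hc₂ hce₂))

lemma ncard_rsupp_colorClass_le [Finite V] {R : Set (Sym2 V)} (hR : R ⊆ A.edgeSet)
    {α : Type*} (c : A.Coloring α) (i : α) : {v ∈ Rsupp R | c v = i}.ncard ≤ R.ncard := by
  choose p hpR hvp using fun v : {v ∈ Rsupp R | c v = i} => v.2.1
  refine Nat.card_le_card_of_injective (fun v => ⟨p v, hpR v⟩) fun v w hvw => ?_
  have hpvw : p v = p w := congrArg Subtype.val hvw
  have hw : (w : V) ∈ p v := hpvw ▸ hvp w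
  obtain ⟨u, hu⟩ := Sym2.mem_iff_exists.mp (hvp v)
  rw [hu, Sym2.mem_iff] at hw
  rcases hw with hwv | hwu
  · exact Subtype.ext hwv.symm
  · have hadj : A.Adj v u := by rw [← SimpleGraph.mem_edgeSet, ← hu]; exact hR (hpR v)
    exact absurd (v.2.2.trans (hwu ▸ w.2.2).symm) (c.valid hadj)

end Matching

section Hall

lemma Set.Finite.exists_injective_of_forall_ncard_le {α β : Type*} [Finite β] {s : Set α}
    (hs : s.Finite) (r : α → β → Prop) (h : ∀ t ⊆ s, t.ncard ≤ {y | ∃ x ∈ t, r x y}.ncard) :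
    ∃ f : s → β, Function.Injective f ∧ ∀ x : s, r x (f x) := by
  classical
  have := hs.fintype
  have := Fintype.ofFinite β
  refine (Fintype.all_card_le_filter_rel_iff_exists_injective fun (x : s) y => r x y).mp
    fun T => ?_
  have hT := h (Subtype.val '' (T : Set s)) (by simp)
  rw [Set.ncard_image_of_injective _ Subtype.val_injective, Set.ncard_coe_finset] at hT
  convert hT using 1
  rw [← Set.ncard_coe_finset]
  congr 1
  ext y
  simp

variable {V : Type*} {A : SimpleGraph V}

lemma SimpleGraph.IsAcyclic.ncard_le_ncard_adj [Finite V] (hA : A.IsAcyclic) {B G : Set V}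
    (hBG : Disjoint B G) (hdeg : ∀ b ∈ B, 2 ≤ (A.neighborSet b ∩ G).ncard) (g : V) {t : Set V}
    (ht : t ⊆ B) : t.ncard ≤ {y | ∃ b ∈ t, A.Adj b y ∧ y ∈ G ∧ y ≠ g}.ncard := by
  classical
  have := Fintype.ofFinite V
  set N := {y | ∃ b ∈ t, A.Adj b y ∧ y ∈ G ∧ y ≠ g}
  set E : Set (Sym2 V) := {e | ∃ b ∈ t, ∃ y ∈ G, A.Adj b y ∧ e = s(b, y)}
  -- double counting: each `b ∈ t` lies on at least two edges of `E`, each edge of `E` has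
  -- exactly one endpoint in `t`
  have hE : t.ncard * 2 ≤ E.ncard * 1 := by
    rw [Set.ncard_eq_toFinset_card' t, Set.ncard_eq_toFinset_card' E]
    refine Finset.card_mul_le_card_mul (fun b e => b ∈ e) (fun b hb => ?_) (fun e he => ?_)
    · rw [Set.mem_toFinset] at hb
      rw [← Set.ncard_coe_finset, Finset.coe_bipartiteAbove]
      refine (hdeg b (ht hb)).trans (Set.ncard_le_ncard_of_injOn (fun y => s(b, y)) ?_ ?_)
      · rintro y ⟨hy, hyG⟩
        exact ⟨Set.mem_toFinset.mpr ⟨b, hb, y, hyG, hy, rfl⟩, Sym2.mem_mk_left b y⟩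
      · exact fun y₁ _ y₂ _ h => Sym2.congr_right.mp h
    · obtain ⟨b, -, y, hy, -, rfl⟩ := Set.mem_toFinset.mp he
      refine Finset.card_le_one.mpr fun x hx x' hx' => ?_
      have hxb : ∀ x ∈ t.toFinset.bipartiteBelow (fun b e => b ∈ e) s(b, y), x = b := by
        intro x hx
        rw [Finset.mem_bipartiteBelow, Set.mem_toFinset, Sym2.mem_iff] at hx
        exact hx.2.resolve_right fun hxy => hBG.ne_of_mem (ht hx.1) hy hxy
      rw [hxb x hx, hxb x' hx']
  have hEW : ∀ e ∈ E, ∀ v ∈ e, v ∈ t ∪ N ∪ {g} := by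
    rintro e ⟨b, hb, y, hy, hby, rfl⟩ v hv
    rcases Sym2.mem_iff.mp hv with rfl | rfl
    · exact Or.inl (Or.inl hb)
    · by_cases hvg : v = g
      · exact Or.inr hvg
      · exact Or.inl (Or.inr ⟨b, hb, hby, hy, hvg⟩)
  have hlt := hA.ncard_lt_of_forall_mem (Set.toFinite _) ⟨g, Or.inr rfl⟩
    (by rintro e ⟨b, -, y, -, hby, rfl⟩; exact hby) hEW
  have hW := (Set.ncard_union_le (t ∪ N) {g}).trans
    (Nat.add_le_add (Set.ncard_union_le t N) (Set.ncard_singleton g).le)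
  omega

lemma SimpleGraph.IsAcyclic.exists_injective_adj [Finite V] (hA : A.IsAcyclic) {B G : Set V}
    (hBG : Disjoint B G) (hdeg : ∀ b ∈ B, 2 ≤ (A.neighborSet b ∩ G).ncard) (g : V) :
    ∃ f : B → V, Function.Injective f ∧ ∀ b : B, A.Adj b (f b) ∧ f b ∈ G ∧ f b ≠ g :=
  (Set.toFinite B).exists_injective_of_forall_ncard_le _ fun _ ht =>
    hA.ncard_le_ncard_adj hBG hdeg g ht

end Hall

namespace IsBColoring

variable {V : Type*} {A : SimpleGraph V} {B G : Set V} {R : Set (Sym2 V)}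

lemma isMatch (hBC : IsBColoring A B R G) : IsMatch A R :=
  have ⟨hRE, _, _, _, _, hR, _⟩ := hBC
  ⟨hRE, hR⟩

lemma mem_or (hBC : IsBColoring A B R G) (v : V) : v ∈ B ∨ v ∈ G ∨ v ∈ Rsupp R := by
  have hv : v ∈ B ∪ G ∪ Rsupp R := hBC.2.1 ▸ Set.mem_univ v
  rcases hv with (hv | hv) | hv
  exacts [Or.inl hv, Or.inr (Or.inl hv), Or.inr (Or.inr hv)]

lemma isVC (hBC : IsBColoring A B R G) (c : A.Coloring (Fin 2)) (i : Fin 2) :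
    IsVC A (B ∪ {v ∈ Rsupp R | c v = i}) := by
  intro e he
  induction e with
  | _ v w =>
    have hvw : A.Adj v w := he
    have ⟨_, _, _, _, _, _, hGB, _⟩ := hBC
    rcases hBC.mem_or v with hv | hv | hv
    · exact ⟨v, Or.inl hv, Sym2.mem_mk_left v w⟩
    · exact ⟨w, Or.inl (hGB v w hvw hv), Sym2.mem_mk_right v w⟩
    rcases hBC.mem_or w with hw | hw | hw
    · exact ⟨w, Or.inl hw, Sym2.mem_mk_right v w⟩
    · exact ⟨v, Or.inl (hGB w v hvw.symm hw), Sym2.mem_mk_left v w⟩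
    have hc := c.valid hvw
    rcases (by omega : c v = i ∨ c w = i) with hcv | hcw
    · exact ⟨v, Or.inr ⟨hv, hcv⟩, Sym2.mem_mk_left v w⟩
    · exact ⟨w, Or.inr ⟨hw, hcw⟩, Sym2.mem_mk_right v w⟩

lemma ncard_isVC_le [Finite V] (hBC : IsBColoring A B R G) (c : A.Coloring (Fin 2)) (i : Fin 2) :
    (B ∪ {v ∈ Rsupp R | c v = i}).ncard ≤ R.ncard + B.ncard := by
  have := ncard_rsupp_colorClass_le hBC.1 c i
  have := Set.ncard_union_le B {v ∈ Rsupp R | c v = i}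
  omega

lemma ncard_le_of_isMatch [Finite V] (hBC : IsBColoring A B R G) (hA : A.IsAcyclic)
    {N : Set (Sym2 V)} (hN : IsMatch A N) : N.ncard ≤ R.ncard + B.ncard := by
  obtain ⟨c⟩ := hA.colorable_two
  exact (hN.ncard_le_of_isVC (hBC.isVC c 0)).trans (hBC.ncard_isVC_le c 0)

lemma isMatch_union_range (hBC : IsBColoring A B R G) {f : B → V}
    (hf : Function.Injective f) (hfG : ∀ b : B, A.Adj b (f b) ∧ f b ∈ G) :
    IsMatch A (R ∪ Set.range fun b : B => s(↑b, f b)) := by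
  obtain ⟨hRE, -, hBG, hBR, hGR, hR, -, -⟩ := hBC
  refine ⟨Set.union_subset hRE (Set.range_subset_iff.mpr fun b => (hfG b).1), ?_⟩
  have hBf : ∀ (b b' : B), (b : V) ≠ f b' := fun b b' h => hBG.ne_of_mem b.2 (hfG b').2 h
  have hRf : ∀ e ∈ R, ∀ (b : B) v, v ∈ e → v ∉ s(↑b, f b) := by
    intro e he b v hve hv
    rcases Sym2.mem_iff.mp hv with rfl | rfl
    · exact hBR.ne_of_mem b.2 ⟨e, he, hve⟩ rfl
    · exact hGR.ne_of_mem (hfG b).2 ⟨e, he, hve⟩ rfl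
  rintro e (he | ⟨b, rfl⟩) e' (he' | ⟨b', rfl⟩) hne v ⟨hv, hv'⟩
  · exact hR e he e' he' hne v ⟨hv, hv'⟩
  · exact hRf e he b' v hv hv'
  · exact hRf e' he' b v hv' hv
  · rw [Sym2.mem_iff] at hv hv'
    rcases hv with rfl | rfl <;> rcases hv' with h | h
    · exact hne (by rw [Subtype.ext h])
    · exact hBf b b' h
    · exact hBf b' b h.symm
    · exact hne (by rw [hf h])

lemma ncard_union_range [Finite V] (hBC : IsBColoring A B R G) {f : B → V}
    (hfG : ∀ b : B, A.Adj b (f b) ∧ f b ∈ G) :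
    (R ∪ Set.range fun b : B => s(↑b, f b)).ncard = R.ncard + B.ncard := by
  obtain ⟨-, -, hBG, hBR, -, -, -, -⟩ := hBC
  have hdisj : Disjoint R (Set.range fun b : B => s(↑b, f b)) := by
    rw [Set.disjoint_right]
    rintro _ ⟨b, rfl⟩ hb
    exact hBR.ne_of_mem b.2 ⟨_, hb, Sym2.mem_mk_left _ _⟩ rfl
  have hinj : Function.Injective fun b : B => s(↑b, f b) := by
    intro b b' h
    rcases Sym2.eq_iff.mp h with ⟨h, -⟩ | ⟨h, -⟩
    · exact Subtype.ext h
    · exact absurd h (hBG.ne_of_mem b.2 (hfG b').2)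
  rw [Set.ncard_union_eq hdisj, Set.ncard_range_of_injective hinj, Nat.card_coe_set_eq]

lemma exists_isMaxMatch [Finite V] (hBC : IsBColoring A B R G) (hA : A.IsAcyclic) (g : V) :
    ∃ M, IsMaxMatch A M ∧ M.ncard = R.ncard + B.ncard ∧
      ∀ e ∈ M, e ∈ R ∨ ∃ b ∈ B, ∃ y ∈ G, y ≠ g ∧ e = s(b, y) := by
  have ⟨_, _, hBG, _, _, _, _, hdeg⟩ := hBC
  obtain ⟨f, hf, hfG⟩ := hA.exists_injective_adj hBG hdeg g
  have hfG' : ∀ b : B, A.Adj b (f b) ∧ f b ∈ G := fun b => ⟨(hfG b).1, (hfG b).2.1⟩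
  have hcard := hBC.ncard_union_range hfG'
  refine ⟨_, ⟨hBC.isMatch_union_range hf hfG', fun N hN => ?_⟩, hcard, ?_⟩
  · exact hcard ▸ hBC.ncard_le_of_isMatch hA hN
  · rintro e (he | ⟨b, rfl⟩)
    · exact Or.inl he
    · exact Or.inr ⟨b, b.2, f b, (hfG b).2.1, (hfG b).2.2, rfl⟩

lemma ncard_eq_of_isMaxMatch [Finite V] (hBC : IsBColoring A B R G) (hA : A.IsAcyclic)
    {M : Set (Sym2 V)} (hM : IsMaxMatch A M) : M.ncard = R.ncard + B.ncard := by
  refine (hBC.ncard_le_of_isMatch hA hM.1).antisymm ?_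
  cases isEmpty_or_nonempty V with
  | inl => simp [Set.eq_empty_of_isEmpty B, Set.eq_empty_of_isEmpty R]
  | inr h =>
    obtain ⟨M₀, hM₀, hcard, -⟩ := hBC.exists_isMaxMatch hA h.some
    exact hcard ▸ hM.2 M₀ hM₀.1

lemma ncard_isVC_le_of_isMaxMatch [Finite V] (hBC : IsBColoring A B R G) (hA : A.IsAcyclic)
    {M : Set (Sym2 V)} (hM : IsMaxMatch A M) (c : A.Coloring (Fin 2)) (i : Fin 2) :
    (B ∪ {v ∈ Rsupp R | c v = i}).ncard ≤ M.ncard :=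
  (hBC.ncard_isVC_le c i).trans (hBC.ncard_eq_of_isMaxMatch hA hM).ge

lemma exists_mem_of_isMaxMatch [Finite V] (hBC : IsBColoring A B R G) (hA : A.IsAcyclic)
    {M : Set (Sym2 V)} (hM : IsMaxMatch A M) {v : V} (hv : v ∉ G) : ∃ e ∈ M, v ∈ e := by
  obtain ⟨c⟩ := hA.colorable_two
  refine hM.1.exists_mem_of_isVC (hBC.isVC c (c v)) (hBC.ncard_isVC_le_of_isMaxMatch hA hM c _) ?_
  rcases hBC.mem_or v with hvB | hvG | hvR
  exacts [Or.inl hvB, absurd hvG hv, Or.inr ⟨hvR, rfl⟩]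

lemma subset_of_isMaxMatch [Finite V] (hBC : IsBColoring A B R G) (hA : A.IsAcyclic)
    {M : Set (Sym2 V)} (hM : IsMaxMatch A M) : R ⊆ M := by
  have ⟨_, _, _, hBR, hGR, _, hGB, _⟩ := hBC
  obtain ⟨c⟩ := hA.colorable_two
  set M' := {e ∈ M | ∀ x ∈ e, x ∈ Rsupp R}
  have hM' : IsMatch A M' := ⟨fun e he => hM.1.1 he.1, fun e he f hf => hM.1.2 e he.1 f hf.1⟩
  -- the edges of `M` at vertices of `R` form a second perfect matching of these vertices
  have hsupp : Rsupp R = Rsupp M' := by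
    refine subset_antisymm (fun w hw => ?_) fun w ⟨e, he, hwe⟩ => he.2 w hwe
    obtain ⟨e, he, hwe⟩ := hBC.exists_mem_of_isMaxMatch hA hM (hGR.ne_of_mem · hw rfl)
    obtain ⟨z, rfl⟩ := Sym2.mem_iff_exists.mp hwe
    have hwz : A.Adj w z := hM.1.1 he
    have hz : z ∈ Rsupp R := by
      rcases hBC.mem_or z with hzB | hzG | hzR
      · -- then `s(w, z)` would meet the minimum vertex cover through `w` twice
        exact absurd (hM.1.eq_of_isVC (hBC.isVC c (c w))
          (hBC.ncard_isVC_le_of_isMaxMatch hA hM c _) he (Or.inr ⟨hw, rfl⟩) (Or.inl hzB)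
          (Sym2.mem_mk_left w z) (Sym2.mem_mk_right w z)) hwz.ne
      · exact absurd hw (Set.disjoint_left.mp hBR (hGB z w hwz.symm hzG))
      · exact hzR
    exact ⟨s(w, z), ⟨he, fun x hx => by rcases Sym2.mem_iff.mp hx with rfl | rfl <;> assumption⟩,
      Sym2.mem_mk_left w z⟩
  intro e he
  exact ((hA.eq_of_isMatch_of_rsupp_eq hBC.isMatch hM' hsupp) ▸ he).1

lemma exists_isMaxMatch_forall_not_mem [Finite V] (hBC : IsBColoring A B R G)
    (hA : A.IsAcyclic) {v : V} (hv : v ∈ G) : ∃ M, IsMaxMatch A M ∧ ∀ e ∈ M, v ∉ e := by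
  have ⟨_, _, hBG, _, hGR, _⟩ := hBC
  obtain ⟨M, hM, -, hMR⟩ := hBC.exists_isMaxMatch hA v
  refine ⟨M, hM, fun e he hve => ?_⟩
  rcases hMR e he with heR | ⟨b, hb, y, -, hyv, rfl⟩
  · exact hGR.ne_of_mem hv ⟨e, heR, hve⟩ rfl
  · rcases Sym2.mem_iff.mp hve with rfl | rfl
    exacts [hBG.ne_of_mem hb hv rfl, hyv rfl]

lemma exists_isMaxMatch_not_mem [Finite V] (hBC : IsBColoring A B R G) (hA : A.IsAcyclic)
    {e : Sym2 V} (he : e ∈ A.edgeSet) (heR : e ∉ R) : ∃ M, IsMaxMatch A M ∧ e ∉ M := by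
  induction e with
  | _ v w =>
    -- if `s(v, w)` were in the matchings built for `v` and for `w`, both ends would lie in `G`
    have hmem_G : ∀ {x y : V}, (∀ M, IsMaxMatch A M → s(x, y) ∈ M) → s(x, y) ∉ R → y ∈ G := by
      intro x y hxy hxyR
      obtain ⟨M, hM, -, hMR⟩ := hBC.exists_isMaxMatch hA x
      rcases hMR _ (hxy M hM) with h | ⟨b, -, z, hz, hzx, h⟩
      · exact absurd h hxyR
      · rcases Sym2.eq_iff.mp h with ⟨-, rfl⟩ | ⟨rfl, -⟩
        exacts [hz, absurd rfl hzx]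
    by_contra! hall
    have hw := hmem_G hall heR
    have hv := hmem_G (fun M hM => Sym2.eq_swap ▸ hall M hM) (Sym2.eq_swap ▸ heR)
    have ⟨_, _, hBG, _, _, _, hGB, _⟩ := hBC
    exact hBG.ne_of_mem (hGB v w he hv) hw rfl

end IsBColoring

theorem backbone_characterization (A : SimpleGraph V) (hA : A.IsTree)
    (B : Set V) (R : Set (Sym2 V)) (G : Set V) (hBC : IsBColoring A B R G) :
    {v : V | ∃ M : Set (Sym2 V), IsMaxMatch A M ∧ ∀ e ∈ M, v ∉ e} = G ∧
    {v : V | (∀ M : Set (Sym2 V), IsMaxMatch A M → ∃ e ∈ M, v ∈ e) ∧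
      ¬∃ e ∈ A.edgeSet, v ∈ e ∧ ∀ M : Set (Sym2 V), IsMaxMatch A M → e ∈ M} = B ∧
    {e : Sym2 V | e ∈ A.edgeSet ∧ ∀ M : Set (Sym2 V), IsMaxMatch A M → e ∈ M} = R := by
  have hA := hA.isAcyclic
  have ⟨hRE, _, hBG, hBR, _⟩ := hBC
  have hforced : ∀ e ∈ R, ∀ M, IsMaxMatch A M → e ∈ M :=
    fun e he M hM => hBC.subset_of_isMaxMatch hA hM he
  refine ⟨Set.ext fun v => ⟨?_, hBC.exists_isMaxMatch_forall_not_mem hA⟩,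
    Set.ext fun v => ⟨?_, fun hv => ⟨?_, ?_⟩⟩,
    Set.ext fun e => ⟨?_, fun he => ⟨hRE he, hforced e he⟩⟩⟩
  · rintro ⟨M, hM, hv⟩
    by_contra hvG
    obtain ⟨e, he, hve⟩ := hBC.exists_mem_of_isMaxMatch hA hM hvG
    exact hv e he hve
  · rintro ⟨hcov, hfree⟩
    rcases hBC.mem_or v with hvB | hvG | ⟨e, he, hve⟩
    · exact hvB
    · obtain ⟨M, hM, hMv⟩ := hBC.exists_isMaxMatch_forall_not_mem hA hvG
      obtain ⟨e, he, hve⟩ := hcov M hM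
      exact absurd hve (hMv e he)
    · exact absurd ⟨e, hRE he, hve, hforced e he⟩ hfree
  · exact fun M hM => hBC.exists_mem_of_isMaxMatch hA hM (Set.disjoint_left.mp hBG hv)
  · rintro ⟨e, he, hve, hall⟩
    have heR : e ∉ R := fun heR => Set.disjoint_left.mp hBR hv ⟨e, heR, hve⟩
    obtain ⟨M, hM, heM⟩ := hBC.exists_isMaxMatch_not_mem hA he heR
    exact heM (hall M hM)
  · rintro ⟨he, hall⟩
    by_contra heR
    obtain ⟨M, hM, heM⟩ := hBC.exists_isMaxMatch_not_mem hA he heR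
    exact heM (hall M hM)
end

section
/- In a finite tree, the dimension of the kernel of the adjacency matrix (over the rationals) equals |G| − |B|, where (B, R, G) is the b-coloring of the tree. -/
variable {V : Type*} [Fintype V] [DecidableEq V]

/-!
Vectors supported on `G` are annihilated by every row of the adjacency matrix outside `B`,
because all neighbours of `G` lie in `B`; the `|B|` remaining rows leave a kernel of dimension
at least `|G| - |B|`.

Conversely, every vertex of `B` has two neighbours in `G`, and the forest induced on `s ∪ N(s)`
has fewer than `|s| + |N(s)|` edges but at least `2|s|` of them, so Hall's condition holds and
`B` is matched injectively into `G`. Together with `R` this is a matching `M` missing exactly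
`|G| - |B|` vertices. Peeling off a leaf and its partner shows that a forest with a perfect
matching has invertible adjacency matrix, so a kernel vector vanishing off `M` vanishes, and
the kernel injects into the functions on the unmatched vertices.
-/

open Finset Module SimpleGraph

namespace SimpleGraph

variable {A : SimpleGraph V}

omit [Fintype V] [DecidableEq V] in
theorem IsAcyclic.exists_neighborSet_subsingleton [Finite V] [Nonempty V] (hA : A.IsAcyclic) :
    ∃ v, (A.neighborSet v).Subsingleton := by
  obtain ⟨u, v, p, hp, hlongest⟩ := Walk.exists_isPath_forall_isPath_length_le_length A
  refine ⟨u, fun w₁ hw₁ w₂ hw₂ ↦ ?_⟩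
  suffices ∀ w, A.Adj u w → w = p.snd from (this w₁ hw₁).trans (this w₂ hw₂).symm
  intro w huw
  by_cases hw : w ∈ p.support
  · exact hA.eq_snd_of_adj_start hp huw hw
  · have := hlongest _ _ _ (hp.cons hw (h := huw.symm))
    simp at this

omit [Fintype V] [DecidableEq V] in
theorem IsAcyclic.exists_card_adj_le_one (hA : A.IsAcyclic) [DecidableRel A.Adj] {S : Finset V}
    (hS : S.Nonempty) : ∃ v ∈ S, #{w ∈ S | A.Adj v w} ≤ 1 := by
  have : Nonempty S := hS.to_subtype
  obtain ⟨⟨v, hv⟩, hleaf⟩ := (hA.induce S).exists_neighborSet_subsingleton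
  refine ⟨v, hv, card_le_one.2 fun w₁ hw₁ w₂ hw₂ ↦ ?_⟩
  rw [mem_filter] at hw₁ hw₂
  exact congrArg Subtype.val (@hleaf ⟨w₁, hw₁.1⟩ hw₁.2 ⟨w₂, hw₂.1⟩ hw₂.2)

omit [Fintype V] in
theorem IsAcyclic.sum_card_adj_lt (hA : A.IsAcyclic) [DecidableRel A.Adj] {T : Finset V}
    (hT : T.Nonempty) : ∑ v ∈ T, #{w ∈ T | A.Adj v w} < 2 * #T := by
  induction T using Finset.strongInduction with
  | H T ih =>
  obtain ⟨v, hvT, hleaf⟩ := hA.exists_card_adj_le_one hT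
  obtain hT' | hT' := (T.erase v).eq_empty_or_nonempty
  · rw [erase_eq_empty_iff] at hT'
    obtain rfl | rfl := hT'
    · simp at hvT
    · simp only [sum_singleton, card_singleton]; omega
  have hsplit : ∀ w ∈ T.erase v,
      #{z ∈ T | A.Adj w z} = #{z ∈ T.erase v | A.Adj w z} + if A.Adj v w then 1 else 0 := by
    intro w hw
    conv_lhs => rw [← insert_erase hvT, filter_insert]
    split_ifs with hwv hvw hvw <;> simp_all [adj_comm]
  have hback : ∑ w ∈ T.erase v, (if A.Adj v w then 1 else 0) ≤ 1 := by
    rw [← card_filter]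
    exact (card_le_card (filter_subset_filter _ (erase_subset v T))).trans hleaf
  calc ∑ w ∈ T, #{z ∈ T | A.Adj w z}
      = ∑ w ∈ T.erase v, #{z ∈ T | A.Adj w z} + #{z ∈ T | A.Adj v z} :=
        (sum_erase_add _ _ hvT).symm
    _ = ∑ w ∈ T.erase v, #{z ∈ T.erase v | A.Adj w z}
          + ∑ w ∈ T.erase v, (if A.Adj v w then 1 else 0) + #{z ∈ T | A.Adj v z} := by
        rw [sum_congr rfl hsplit, sum_add_distrib]
    _ < 2 * #T := by
        have := ih _ (erase_ssubset hvT) hT'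
        rw [card_erase_of_mem hvT] at this
        have := card_pos.2 hT
        omega

omit [Fintype V] in
theorem IsAcyclic.card_lt_card_of_two_le_card_adj (hA : A.IsAcyclic) [DecidableRel A.Adj]
    {s t : Finset V} (hst : Disjoint s t) (hs : s.Nonempty)
    (hdeg : ∀ b ∈ s, 2 ≤ #{g ∈ t | A.Adj b g}) : #s < #t := by
  have hsym : ∑ g ∈ t, #{b ∈ s | A.Adj g b} = ∑ b ∈ s, #{g ∈ t | A.Adj b g} := by
    simp only [card_filter]
    rw [sum_comm]
    simp only [adj_comm]
  have hcross : ∑ b ∈ s, #{g ∈ t | A.Adj b g} + ∑ g ∈ t, #{b ∈ s | A.Adj g b}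
      ≤ ∑ v ∈ s ∪ t, #{w ∈ s ∪ t | A.Adj v w} := by
    rw [sum_union hst]
    gcongr
    exacts [subset_union_right, subset_union_left]
  have hlow : 2 * #s ≤ ∑ b ∈ s, #{g ∈ t | A.Adj b g} := by
    rw [mul_comm, ← smul_eq_mul, ← sum_const]
    exact sum_le_sum hdeg
  have hup := hA.sum_card_adj_lt (T := s ∪ t) hs.inl
  rw [card_union_of_disjoint hst] at hup
  omega

theorem IsAcyclic.exists_injective_adj_s17 (hA : A.IsAcyclic) {B G : Set V} (hBG : Disjoint B G)
    (hdeg : ∀ b ∈ B, 2 ≤ (A.neighborSet b ∩ G).ncard) :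
    ∃ f : B → V, Function.Injective f ∧ ∀ b, f b ∈ G ∧ A.Adj b (f b) := by
  classical
  refine (Fintype.all_card_le_filter_rel_iff_exists_injective
    (fun (b : B) g ↦ g ∈ G ∧ A.Adj b g)).1 fun s ↦ ?_
  obtain rfl | hs := s.eq_empty_or_nonempty
  · simp
  set t : Finset V := {g | ∃ b ∈ s, g ∈ G ∧ A.Adj b g}
  rw [← card_map (Function.Embedding.subtype _)]
  refine (hA.card_lt_card_of_two_le_card_adj ?_ hs.map fun b hb ↦ ?_).le
  · refine Finset.disjoint_left.2 fun v hv hvt ↦ ?_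
    obtain ⟨b, -, rfl⟩ := mem_map.1 hv
    simp only [t, mem_filter, mem_univ, true_and] at hvt
    obtain ⟨-, -, hG, -⟩ := hvt
    exact hBG.notMem_of_mem_left b.2 hG
  · obtain ⟨b, hbs, rfl⟩ := mem_map.1 hb
    refine (hdeg b b.2).trans ?_
    rw [← Set.ncard_coe_finset]
    refine Set.ncard_le_ncard (fun g ⟨hadj, hg⟩ ↦ ?_) (Set.toFinite _)
    simp only [t, coe_filter, mem_filter, mem_univ, true_and]
    exact ⟨⟨b, hbs, hg, hadj⟩, hadj⟩

omit [Fintype V] in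
theorem Subgraph.IsMatching.exists_adj_mem_erase_erase {M : A.Subgraph} (hM : M.IsMatching)
    {S : Finset V} (hS : ∀ v ∈ S, ∃ w ∈ S, M.Adj v w) {u v : V} (hvu : M.Adj v u) :
    ∀ w ∈ (S.erase v).erase u, ∃ w' ∈ (S.erase v).erase u, M.Adj w w' := by
  intro w hw
  simp only [mem_erase] at hw
  obtain ⟨hwu, hwv, hwS⟩ := hw
  obtain ⟨w', hw'S, hww'⟩ := hS w hwS
  refine ⟨w', mem_erase.2 ⟨fun h ↦ hwv ?_, mem_erase.2 ⟨fun h ↦ hwu ?_, hw'S⟩⟩, hww'⟩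
  · exact hM.eq_of_adj_right (h ▸ hww') hvu
  · exact hM.eq_of_adj_right (h ▸ hww') hvu.symm

omit [Fintype V] in
theorem IsAcyclic.eq_zero_of_isMatching {R : Type*} [AddCommMonoid R] (hA : A.IsAcyclic)
    [DecidableRel A.Adj] {M : A.Subgraph} (hM : M.IsMatching) (S : Finset V)
    (hS : ∀ v ∈ S, ∃ w ∈ S, M.Adj v w) (x : V → R)
    (hx : ∀ v ∈ S, ∑ w ∈ S with A.Adj v w, x w = 0) : ∀ v ∈ S, x v = 0 := by
  induction S using Finset.strongInduction generalizing x with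
  | H S ih =>
  obtain rfl | hne := S.eq_empty_or_nonempty
  · simp
  obtain ⟨v, hvS, hleaf⟩ := hA.exists_card_adj_le_one hne
  obtain ⟨u, huS, hvu⟩ := hS v hvS
  have hnbr : ∀ w ∈ S, A.Adj v w → w = u := fun w hw hvw ↦
    card_le_one.1 hleaf w (mem_filter.2 ⟨hw, hvw⟩) u (mem_filter.2 ⟨huS, hvu.adj_sub⟩)
  have hxu : x u = 0 := by
    rw [← hx v hvS, sum_eq_single_of_mem u (mem_filter.2 ⟨huS, hvu.adj_sub⟩)]
    exact fun w hw hwu ↦ (hwu (hnbr w (mem_filter.1 hw).1 (mem_filter.1 hw).2)).elim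
  set S' := (S.erase v).erase u
  have hmem : ∀ w, w ∈ S' ↔ w ≠ u ∧ w ≠ v ∧ w ∈ S := by simp [S']
  have hS'S : S' ⊂ S := (erase_subset u _).trans_ssubset (erase_ssubset hvS)
  have hxS' := ih S' hS'S (hM.exists_adj_mem_erase_erase hS hvu) x fun w hw ↦ by
    obtain ⟨hwu, -, hwS⟩ := (hmem w).1 hw
    rw [← hx w hwS]
    refine sum_subset (filter_subset_filter _ hS'S.subset) fun z hz hzS' ↦ ?_
    obtain ⟨hzS, hwz⟩ := mem_filter.1 hz
    rcases eq_or_ne z u with rfl | hzu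
    · exact hxu
    rcases eq_or_ne z v with rfl | hzv
    · exact (hwu (hnbr w hwS hwz.symm)).elim
    exact (hzS' (mem_filter.2 ⟨(hmem z).2 ⟨hzu, hzv, hzS⟩, hwz⟩)).elim
  have hxv : x v = 0 := by
    rw [← hx u huS, sum_eq_single_of_mem v (mem_filter.2 ⟨hvS, hvu.adj_sub.symm⟩)]
    intro z hz hzv
    rcases eq_or_ne z u with rfl | hzu
    · exact hxu
    exact hxS' z ((hmem z).2 ⟨hzu, hzv, (mem_filter.1 hz).1⟩)
  intro w hw
  rcases eq_or_ne w u with rfl | hwu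
  · exact hxu
  rcases eq_or_ne w v with rfl | hwv
  · exact hxv
  exact hxS' w ((hmem w).2 ⟨hwu, hwv, hw⟩)

theorem IsAcyclic.finrank_ker_adjMatrix_le {K : Type*} [Field K] (hA : A.IsAcyclic)
    [DecidableRel A.Adj] {M : A.Subgraph} (hM : M.IsMatching) :
    finrank K (LinearMap.ker (Matrix.toLin' (A.adjMatrix K))) ≤ M.vertsᶜ.ncard := by
  classical
  set T := Matrix.toLin' (A.adjMatrix K)
  let ρ : LinearMap.ker T →ₗ[K] (↥M.vertsᶜ → K) :=
    LinearMap.funLeft K K Subtype.val ∘ₗ (LinearMap.ker T).subtype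
  have hρ : Function.Injective ρ := by
    refine (injective_iff_map_eq_zero ρ).2 fun ⟨x, hx⟩ h0 ↦ Subtype.ext ?_
    have hoff : ∀ v ∉ M.verts, x v = 0 := fun v hv ↦ congrFun h0 ⟨v, hv⟩
    have hrow : ∀ v ∈ M.verts.toFinset, ∑ w ∈ M.verts.toFinset with A.Adj v w, x w = 0 := by
      intro v _
      have hv : (A.adjMatrix K).mulVec x v = 0 := congrFun hx v
      rw [adjMatrix_mulVec_apply, neighborFinset_eq_filter] at hv
      rwa [sum_subset (filter_subset_filter (A.Adj v) (subset_univ M.verts.toFinset))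
        fun w hw hwS ↦ hoff w fun h ↦
          hwS (mem_filter.2 ⟨Set.mem_toFinset.2 h, (mem_filter.1 hw).2⟩)]
    have hS : ∀ v ∈ M.verts.toFinset, ∃ w ∈ M.verts.toFinset, M.Adj v w := fun v hv ↦ by
      obtain ⟨w, hvw, -⟩ := hM (Set.mem_toFinset.1 hv)
      exact ⟨w, Set.mem_toFinset.2 (M.edge_vert hvw.symm), hvw⟩
    funext v
    by_cases hv : v ∈ M.verts
    · exact hA.eq_zero_of_isMatching hM _ hS x hrow v (Set.mem_toFinset.2 hv)
    · exact hoff v hv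
  calc finrank K (LinearMap.ker T) ≤ finrank K (↥M.vertsᶜ → K) :=
        LinearMap.finrank_le_finrank_of_injective hρ
    _ = M.vertsᶜ.ncard := by
        rw [finrank_fintype_fun_eq_card, ← Nat.card_eq_fintype_card, Nat.card_coe_set_eq]

theorem ncard_le_finrank_ker_adjMatrix_add {K : Type*} [Field K] [DecidableRel A.Adj]
    {B G : Set V} (hGB : ∀ v w, A.Adj v w → v ∈ G → w ∈ B) :
    G.ncard ≤ finrank K (LinearMap.ker (Matrix.toLin' (A.adjMatrix K))) + B.ncard := by
  classical
  set T := Matrix.toLin' (A.adjMatrix K)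
  let Ψ := Function.ExtendByZero.linearMap K (Subtype.val : G → V)
  let φ := LinearMap.funLeft K K (Subtype.val : B → V) ∘ₗ T ∘ₗ Ψ
  have hΨ : Function.Injective Ψ := fun y z h ↦ funext fun g ↦ by
    simpa [Ψ, Subtype.val_injective.extend_apply] using congrFun h g
  have hker : ∀ y ∈ LinearMap.ker φ, Ψ y ∈ LinearMap.ker T := by
    intro y hy
    funext v
    by_cases hv : v ∈ B
    · exact congrFun hy ⟨v, hv⟩
    · refine sum_eq_zero fun w _ ↦ ?_
      by_cases hw : w ∈ G
      · simp [adjMatrix_apply, show ¬A.Adj v w from fun h ↦ hv (hGB w v h.symm hw)]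
      · simp [Ψ, Function.extend, hw]
  have hinj : Function.Injective (Ψ.restrict hker) := fun y z h ↦
    Subtype.ext (hΨ (congrArg Subtype.val h))
  calc G.ncard = finrank K (LinearMap.range φ) + finrank K (LinearMap.ker φ) := by
        rw [φ.finrank_range_add_finrank_ker, finrank_fintype_fun_eq_card,
          ← Nat.card_eq_fintype_card, Nat.card_coe_set_eq]
    _ ≤ B.ncard + finrank K (LinearMap.ker T) := by
        gcongr
        · refine (Submodule.finrank_le _).trans_eq ?_
          rw [finrank_fintype_fun_eq_card, ← Nat.card_eq_fintype_card, Nat.card_coe_set_eq]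
        · exact LinearMap.finrank_le_finrank_of_injective hinj
    _ = _ := add_comm _ _

omit [Fintype V] [DecidableEq V] in
theorem exists_isMatching_verts_eq_Rsupp {R : Set (Sym2 V)} (hRA : R ⊆ A.edgeSet)
    (hR : ∀ e ∈ R, ∀ f ∈ R, e ≠ f → ∀ v : V, ¬(v ∈ e ∧ v ∈ f)) :
    ∃ M : A.Subgraph, M.verts = Rsupp R ∧ M.IsMatching := by
  refine ⟨{ verts := Rsupp R
            Adj := fun v w ↦ s(v, w) ∈ R
            adj_sub := fun h ↦ hRA h
            edge_vert := fun h ↦ ⟨_, h, Sym2.mem_mk_left _ _⟩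
            symm := ⟨fun v w h ↦ by rwa [Sym2.eq_swap]⟩ }, rfl, ?_⟩
  rintro v ⟨e, he, hve⟩
  refine ⟨Sym2.Mem.other hve, by simpa [Sym2.other_spec] using he, fun w hw ↦ ?_⟩
  have : s(v, w) = e := by_contra fun hne ↦ hR _ hw _ he hne v ⟨Sym2.mem_mk_left _ _, hve⟩
  rw [← Sym2.other_spec hve] at this
  exact Sym2.congr_right.1 this

end SimpleGraph

theorem IsBColoring.finrank_ker_adjMatrix_add_ncard_le {K : Type*} [Field K]
    {A : SimpleGraph V} [DecidableRel A.Adj] (hA : A.IsAcyclic) {B : Set V}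
    {R : Set (Sym2 V)} {G : Set V} (hBC : IsBColoring A B R G) :
    finrank K (LinearMap.ker (Matrix.toLin' (A.adjMatrix K))) + B.ncard ≤ G.ncard := by
  obtain ⟨hRA, hcover, hBG, hBR, hGR, hR, -, hdeg⟩ := hBC
  obtain ⟨f, hf, hfG⟩ := hA.exists_injective_adj_s17 hBG hdeg
  have hrange : Set.range f ⊆ G := Set.range_subset_iff.2 fun b ↦ (hfG b).1
  have hfB : Disjoint B (Set.range f) := hBG.mono_right hrange
  obtain ⟨MB, hMBverts, hMB⟩ := Subgraph.IsMatching.exists_of_disjoint_sets_of_equiv hfB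
    (Equiv.ofInjective f hf) fun b ↦ (hfG b).2
  obtain ⟨MR, hMRverts, hMR⟩ := exists_isMatching_verts_eq_Rsupp hRA hR
  have hM : (MR ⊔ MB).IsMatching := hMR.sup hMB <| by
    rw [hMR.support_eq_verts, hMB.support_eq_verts, hMRverts, hMBverts]
    exact hBR.symm.union_right (hGR.symm.mono_right hrange)
  have hcompl : (MR ⊔ MB).vertsᶜ = G \ Set.range f := by
    ext v
    have hv : v ∈ B ∪ G ∪ Rsupp R := hcover ▸ Set.mem_univ v
    simp only [Subgraph.verts_sup, hMRverts, hMBverts, Set.mem_compl_iff, Set.mem_union,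
      Set.mem_sdiff] at hv ⊢
    constructor
    · exact fun h ↦ ⟨by tauto, fun hvf ↦ h (.inr (.inr hvf))⟩
    · rintro ⟨hvG, hvf⟩ (hvR | hvB | hvf')
      exacts [hGR.notMem_of_mem_left hvG hvR, hBG.notMem_of_mem_left hvB hvG, hvf hvf']
  have hle := hA.finrank_ker_adjMatrix_le (K := K) hM
  rw [hcompl] at hle
  have := Set.ncard_sdiff_add_ncard_of_subset hrange
  rw [Set.ncard_range_of_injective hf, Nat.card_coe_set_eq] at this
  omega

theorem kernel_dim_eq (A : SimpleGraph V) [DecidableRel A.Adj] (hA : A.IsTree)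
    (B : Set V) (R : Set (Sym2 V)) (G : Set V) (hBC : IsBColoring A B R G) :
    (Module.finrank ℚ (LinearMap.ker (Matrix.toLin' (A.adjMatrix ℚ))) : ℤ)
      = (G.ncard : ℤ) - B.ncard := by
  have hup := hBC.finrank_ker_adjMatrix_add_ncard_le (K := ℚ) hA.isAcyclic
  obtain ⟨-, -, -, -, -, -, hGB, -⟩ := hBC
  have hlow := ncard_le_finrank_ker_adjMatrix_add (K := ℚ) hGB
  omega
end
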